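/- Let F, G, H be Hermitian positive-semidefinite N×N matrices and suppose the semidefinite program min { ⟨H, X⟩ : X ⪰ 0, ⟨F, X⟩ = 1, ⟨G, X⟩ = 0 } is feasible (where ⟨A,B⟩ = tr(AB)). Then the optimal value is attained at a rank-one matrix X_opt = x x†. -/

import Mathlib

open Matrix
open scoped ComplexOrder

lemma trace_mul_vecMulVec {N : ℕ} (F : Matrix (Fin N) (Fin N) ℂ) (x : Fin N → ℂ) :
    (F * vecMulVec x (star x)).trace = star x ⬝ᵥ F *ᵥ x := by
  simp only [trace, diag, mul_apply, vecMulVec_apply, dotProduct, mulVec, Pi.star_apply,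
    Finset.mul_sum]

  refine Finset.sum_congr rfl fun i _ => Finset.sum_congr rfl fun k _ => by ring

lemma posSemidef_vecMulVec' {N : ℕ} (x : Fin N → ℂ) :
    (vecMulVec x (star x)).PosSemidef := by
  rw [posSemidef_iff_dotProduct_mulVec]
  constructor
  · ext i j; simp [vecMulVec_apply, conjTranspose_apply, mul_comm]
  · intro y
    have : star y ⬝ᵥ (vecMulVec x (star x)) *ᵥ y = star (star x ⬝ᵥ y) * (star x ⬝ᵥ y) := by
      simp [vecMulVec_apply, dotProduct, mulVec, Finset.mul_sum, Finset.sum_mul]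
      rw [Finset.sum_comm]
      refine Finset.sum_congr rfl fun i _ => Finset.sum_congr rfl fun k _ => by ring
    rw [this]
    exact mul_star_self_nonneg _ |>.trans_eq (by rw [mul_comm])

lemma conjTranspose_mul_self_eq_sum {N : ℕ} (A : Matrix (Fin N) (Fin N) ℂ) :
    Aᴴ * A = ∑ l : Fin N, vecMulVec (fun i => star (A l i)) (star (fun i => star (A l i))) := by
  ext i j
  simp only [mul_apply, conjTranspose_apply, Matrix.sum_apply, vecMulVec_apply, Pi.star_apply,
    star_star]

lemma vecMulVec_real_smul {N : ℕ} (c : ℝ) (x : Fin N → ℂ) :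
    vecMulVec ((c:ℂ) • x) (star ((c:ℂ) • x)) = ((c^2 : ℝ) : ℂ) • vecMulVec x (star x) := by
  ext i j
  simp [vecMulVec_apply, smul_eq_mul]
  ring

/-- A feasible SDP min{⟨H,X⟩ : X ⪰ 0, ⟨F,X⟩ = 1, ⟨G,X⟩ = 0} with
PSD data F, G, H whose minimum is attained (value v) attains its optimal value
at a rank-one matrix X = x x†. -/
theorem sdp_rank_one_optimizer
    (N : ℕ) (F G H : Matrix (Fin N) (Fin N) ℂ)
    (hF : F.PosSemidef) (hG : G.PosSemidef) (hH : H.PosSemidef)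
    (v : ℝ)
    (hv : IsLeast {r : ℝ | ∃ X : Matrix (Fin N) (Fin N) ℂ,
      X.PosSemidef ∧ (F * X).trace = 1 ∧ (G * X).trace = 0 ∧
      (r : ℂ) = (H * X).trace} v) :
    ∃ x : Fin N → ℂ,
      (Matrix.vecMulVec x (star x)).PosSemidef ∧
      (F * Matrix.vecMulVec x (star x)).trace = 1 ∧
      (G * Matrix.vecMulVec x (star x)).trace = 0 ∧
      (v : ℂ) = (H * Matrix.vecMulVec x (star x)).trace := by
  classical
  obtain ⟨X, hX, hFX, hGX, hHX⟩ := hv.1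
  open scoped MatrixOrder in obtain ⟨A, hA⟩ := CStarAlgebra.nonneg_iff_eq_star_mul_self.mp hX.nonneg
  rw [star_eq_conjTranspose] at hA
  subst hA
  set y : Fin N → Fin N → ℂ := fun l i => star (A l i) with hy
  have hdecomp : ∀ M : Matrix (Fin N) (Fin N) ℂ,
      (M * (Aᴴ * A)).trace = ∑ l, star (y l) ⬝ᵥ M *ᵥ (y l) := by
    intro M
    rw [conjTranspose_mul_self_eq_sum A, Finset.mul_sum, trace_sum]
    exact Finset.sum_congr rfl fun l _ => trace_mul_vecMulVec M (y l)
  have key : ∀ (M : Matrix (Fin N) (Fin N) ℂ), M.PosSemidef → ∀ z : Fin N → ℂ,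
      0 ≤ (star z ⬝ᵥ M *ᵥ z).re ∧ star z ⬝ᵥ M *ᵥ z = (((star z ⬝ᵥ M *ᵥ z).re : ℝ) : ℂ) := by
    intro M hM z
    have h := hM.dotProduct_mulVec_nonneg z
    rw [Complex.le_def] at h
    exact ⟨by simpa using h.1, Complex.ext (by simp) (by simpa using h.2.symm)⟩
  set f : Fin N → ℝ := fun l => (star (y l) ⬝ᵥ F *ᵥ (y l)).re with hf
  set g : Fin N → ℝ := fun l => (star (y l) ⬝ᵥ G *ᵥ (y l)).re with hg
  set h : Fin N → ℝ := fun l => (star (y l) ⬝ᵥ H *ᵥ (y l)).re with hh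
  have hfsum : ∑ l, f l = 1 := by
    have := hFX
    rw [hdecomp] at this
    have h2 : ((∑ l, f l : ℝ) : ℂ) = 1 := by
      rw [Complex.ofReal_sum]
      rw [← this]
      exact Finset.sum_congr rfl fun l _ => ((key F hF (y l)).2).symm
    exact_mod_cast h2
  have hgzero : ∀ l, g l = 0 := by
    have := hGX
    rw [hdecomp] at this
    have h2 : ((∑ l, g l : ℝ) : ℂ) = 0 := by
      rw [Complex.ofReal_sum, ← this]
      exact Finset.sum_congr rfl fun l _ => ((key G hG (y l)).2).symm
    have h3 : ∑ l, g l = 0 := by exact_mod_cast h2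
    intro l
    exact (Finset.sum_eq_zero_iff_of_nonneg
      (fun l _ => (key G hG (y l)).1)).mp h3 l (Finset.mem_univ l)
  have hvsum : v = ∑ l, h l := by
    have := hHX
    rw [hdecomp] at this
    have h2 : (v : ℂ) = ((∑ l, h l : ℝ) : ℂ) := by
      rw [Complex.ofReal_sum, this]
      exact Finset.sum_congr rfl fun l _ => (key H hH (y l)).2
    exact_mod_cast h2
  set s : Finset (Fin N) := Finset.univ.filter (fun l => f l ≠ 0) with hs
  have hsne : s.Nonempty := by
    obtain ⟨l, hl⟩ := Finset.exists_ne_zero_of_sum_ne_zero (by rw [hfsum]; norm_num :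
      ∑ l : Fin N, f l ≠ 0)
    exact ⟨l, by simp [hs, hl]⟩
  obtain ⟨l₀, hl₀s, hmin⟩ := s.exists_min_image (fun l => h l / f l) hsne
  have hf0pos : 0 < f l₀ := by
    have hne : f l₀ ≠ 0 := by simpa [hs] using hl₀s
    exact lt_of_le_of_ne (key F hF (y l₀)).1 (Ne.symm hne)
  set r : ℝ := h l₀ / f l₀ with hr
  set c : ℝ := Real.sqrt (f l₀)⁻¹ with hc
  have hcsq : c ^ 2 = (f l₀)⁻¹ := Real.sq_sqrt (inv_nonneg.mpr hf0pos.le)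
  have htr : ∀ M : Matrix (Fin N) (Fin N) ℂ,
      (M * vecMulVec ((c:ℂ) • y l₀) (star ((c:ℂ) • y l₀))).trace
        = (((f l₀)⁻¹ : ℝ) : ℂ) * (star (y l₀) ⬝ᵥ M *ᵥ (y l₀)) := by
    intro M
    rw [vecMulVec_real_smul, hcsq, Matrix.mul_smul, trace_smul, smul_eq_mul,
      trace_mul_vecMulVec]
  have hx1 : (vecMulVec ((c:ℂ) • y l₀) (star ((c:ℂ) • y l₀))).PosSemidef :=
    posSemidef_vecMulVec' _
  have hx2 : (F * vecMulVec ((c:ℂ) • y l₀) (star ((c:ℂ) • y l₀))).trace = 1 := by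
    rw [htr, (key F hF (y l₀)).2, ← Complex.ofReal_mul, inv_mul_cancel₀ hf0pos.ne',
      Complex.ofReal_one]
  have hx3 : (G * vecMulVec ((c:ℂ) • y l₀) (star ((c:ℂ) • y l₀))).trace = 0 := by
    rw [htr, (key G hG (y l₀)).2, ← Complex.ofReal_mul]
    rw [show (star (y l₀) ⬝ᵥ G *ᵥ (y l₀)).re = g l₀ from rfl, hgzero l₀]
    simp
  have hx4 : (H * vecMulVec ((c:ℂ) • y l₀) (star ((c:ℂ) • y l₀))).trace = (r : ℂ) := by
    rw [htr, (key H hH (y l₀)).2, ← Complex.ofReal_mul, hr, inv_mul_eq_div]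
  have hvr : v ≤ r := hv.2 ⟨_, hx1, hx2, hx3, hx4.symm⟩
  have hsf : ∑ l ∈ s, f l = 1 := by
    rw [hs, Finset.sum_filter_ne_zero, hfsum]
  have hrv : r ≤ v := by
    rw [hvsum]
    calc r = ∑ l ∈ s, r * f l := by rw [← Finset.mul_sum, hsf, mul_one]
      _ ≤ ∑ l ∈ s, h l := Finset.sum_le_sum fun l hl => by
          have hfl : 0 < f l :=
            lt_of_le_of_ne (key F hF (y l)).1 (Ne.symm (by simpa [hs] using hl))
          exact (le_div_iff₀ hfl).mp (hmin l hl)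
      _ ≤ ∑ l, h l := Finset.sum_le_sum_of_subset_of_nonneg (Finset.filter_subset _ _)
          (fun l _ _ => (key H hH (y l)).1)
  have hrveq : r = v := le_antisymm hrv hvr
  exact ⟨(c : ℂ) • y l₀, hx1, hx2, hx3, by rw [hx4, hrveq]⟩
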